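/- Let e ≥ 2, let λ be an e-restricted partition of d and μ a partition of d. If there exists a standard μ-tableau T whose residue sequence i^T equals the ladder weight j^λ, then λ ⊴ μ and λ ∼ μ (i.e., λ is a move for μ: λ ∈ M(μ)). -/
import Mathlib


namespace KN

/-- A subset of `ℤ²_{≥1}` (encoded in `ℕ × ℕ`) shaped like a Young diagram:
all coordinates are `≥ 1` and the set is closed under decreasing either coordinate
(staying `≥ 1`). -/
def IsDiagram (S : Set (ℕ × ℕ)) : Prop :=
  (∀ p ∈ S, 1 ≤ p.1 ∧ 1 ≤ p.2) ∧
  ∀ a b a' b', (a, b) ∈ S → 1 ≤ a' → a' ≤ a → 1 ≤ b' → b' ≤ b → (a', b') ∈ S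

/-- The Young diagram of a partition given as a function `l : ℕ → ℕ`
(`l r` is the `r`-th part, for `r ≥ 1`): the nodes `(a, b)` with `a, b ≥ 1`, `b ≤ l a`. -/
def cells (l : ℕ → ℕ) : Set (ℕ × ℕ) := {p | 1 ≤ p.1 ∧ 1 ≤ p.2 ∧ p.2 ≤ l p.1}

/-- `l` (indexed from `1`) is a weakly decreasing sequence of naturals, eventually zero. -/
def IsPartitionFun (l : ℕ → ℕ) : Prop :=
  (∀ r, 1 ≤ r → l (r + 1) ≤ l r) ∧ ∃ N, ∀ r, N ≤ r → l r = 0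

/-- `l` is a partition of `d`: its Young diagram has exactly `d` nodes. -/
def IsPartitionOf (l : ℕ → ℕ) (d : ℕ) : Prop :=
  IsPartitionFun l ∧ (cells l).Finite ∧ (cells l).ncard = d

/-- `λ_r - λ_{r+1} < e` for all `r ≥ 1`. -/
def IsRestricted (e : ℕ) (l : ℕ → ℕ) : Prop := ∀ r, 1 ≤ r → l r < l (r + 1) + e

/-- The `m`-th ladder `L_m = {(1 + k, m - k(e-1)) : k ≥ 0, k(e-1) < m}`. -/
def ladder (e m : ℕ) : Set (ℕ × ℕ) :=
  {p | ∃ k : ℕ, k * (e - 1) < m ∧ p = (1 + k, m - k * (e - 1))}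

/-- The residue `b - a (mod e)` of a node `(a, b)`. -/
def res (e : ℕ) (p : ℕ × ℕ) : ZMod e := (p.2 : ZMod e) - (p.1 : ZMod e)

/-- `A` is a removable node of the diagram `S`. -/
def Removable (S : Set (ℕ × ℕ)) (A : ℕ × ℕ) : Prop := A ∈ S ∧ IsDiagram (S \ {A})

/-- `B` is an addable node of the diagram `S`. -/
def Addable (S : Set (ℕ × ℕ)) (B : ℕ × ℕ) : Prop := B ∉ S ∧ IsDiagram (S ∪ {B})

/-- `σ_k` of a diagram: the number of nodes in rows `1, …, k`. -/
noncomputable def sigmaSet (S : Set (ℕ × ℕ)) (k : ℕ) : ℕ := (S ∩ {p | p.1 ≤ k}).ncard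

/-- Dominance order on diagrams: `S ⊴ T` iff `σ_k(S) ≤ σ_k(T)` for all `k`. -/
def DomLE (S T : Set (ℕ × ℕ)) : Prop := ∀ k, sigmaSet S k ≤ sigmaSet T k

/-- `R_m = r_1(λ) + ⋯ + r_m(λ)` where `r_u(λ) = |λ ∩ L_u|`. -/
noncomputable def Rlad (e : ℕ) (l : ℕ → ℕ) (m : ℕ) : ℕ :=
  ∑ u ∈ Finset.Icc 1 m, (cells l ∩ ladder e u).ncard

/-- The `s`-th entry of the ladder weight `j^λ`: it equals `m - 1 (mod e)` for the
unique `m` with `R_{m-1} < s ≤ R_m`. -/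
noncomputable def ladderWeight (e : ℕ) (l : ℕ → ℕ) (s : ℕ) : ZMod e :=
  ((sInf {m : ℕ | s ≤ Rlad e l m} - 1 : ℕ) : ZMod e)

/-- A standard tableau of shape `S` (with `|S| = d`): a bijective labelling of the
nodes of `S` by `1, …, d`, increasing along rows and columns. -/
def IsStandardTableau (S : Set (ℕ × ℕ)) (d : ℕ) (T : ℕ × ℕ → ℕ) : Prop :=
  (∀ p ∈ S, 1 ≤ T p ∧ T p ≤ d) ∧
  (∀ p ∈ S, ∀ q ∈ S, T p = T q → p = q) ∧
  (∀ s, 1 ≤ s → s ≤ d → ∃ p ∈ S, T p = s) ∧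
  (∀ a b, (a, b) ∈ S → (a, b + 1) ∈ S → T (a, b) < T (a, b + 1)) ∧
  (∀ a b, (a, b) ∈ S → (a + 1, b) ∈ S → T (a, b) < T (a + 1, b))

/-- The degree `d_A(S)` of a removable node `A` of `S`:
(number of addable nodes of `S` of the same residue strictly below `A`) minus
(number of removable nodes of `S` of the same residue strictly below `A`). -/
noncomputable def degNode (e : ℕ) (S : Set (ℕ × ℕ)) (A : ℕ × ℕ) : ℤ :=
  (({B | Addable S B ∧ res e B = res e A ∧ A.1 < B.1}).ncard : ℤ) -
  (({B | Removable S B ∧ res e B = res e A ∧ A.1 < B.1}).ncard : ℤ)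

/-- The degree of a standard tableau: `deg(T) = Σ_{s=1}^d d_{A_s}(sh(T_{≤ s}))`,
written as a sum over the nodes `p` of `S` (with `s = T p`). -/
noncomputable def degTab (e : ℕ) (S : Set (ℕ × ℕ)) (T : ℕ × ℕ → ℕ) : ℤ :=
  ∑ᶠ p ∈ S, degNode e {q | q ∈ S ∧ T q ≤ T p} p

/-- The set of standard tableaux of shape `S` (of size `d`) whose residue sequence
equals the ladder weight `j^λ` of the partition `l`; tableaux are normalized to
take the value `0` off `S`. -/
def LWTableaux (e d : ℕ) (l : ℕ → ℕ) (S : Set (ℕ × ℕ)) : Set ((ℕ × ℕ) → ℕ) :=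
  {T | IsStandardTableau S d T ∧ (∀ p, p ∉ S → T p = 0) ∧
    ∀ p ∈ S, res e p = ladderWeight e l (T p)}

/-- The quantum integer `[n]_q = q^{n-1} + q^{n-3} + ⋯ + q^{1-n} ∈ ℤ[q, q⁻¹]`. -/
noncomputable def qint (n : ℕ) : LaurentPolynomial ℤ :=
  ∑ k ∈ Finset.range n, LaurentPolynomial.T ((n : ℤ) - 1 - 2 * k)

/-- The quantum factorial `[n]_q! = [n]_q [n-1]_q ⋯ [1]_q`. -/
noncomputable def qfact (n : ℕ) : LaurentPolynomial ℤ :=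
  ∏ k ∈ Finset.Icc 1 n, qint k

def lad (e : ℕ) (p : ℕ × ℕ) : ℕ := p.2 + (p.1 - 1) * (e - 1)

def len (e u : ℕ) : ℕ := (u - 1) / (e - 1) + 1

noncomputable def blk (e : ℕ) (l : ℕ → ℕ) (s : ℕ) : ℕ := sInf {m : ℕ | s ≤ Rlad e l m}

lemma mem_ladder_iff {e : ℕ} (he : 2 ≤ e) {p : ℕ × ℕ} {u : ℕ} :
    p ∈ ladder e u ↔ 1 ≤ p.1 ∧ 1 ≤ p.2 ∧ lad e p = u := by
  constructor
  · rintro ⟨k, hk, rfl⟩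
    simp only [lad]
    set c := k * (e - 1) with hc
    refine ⟨by omega, by omega, ?_⟩
    simp only [Nat.add_sub_cancel_left]  -- (1+k)-1 = k
    omega
  · rintro ⟨h1, h2, h3⟩
    refine ⟨p.1 - 1, ?_, ?_⟩
    · simp only [lad] at h3; set c := (p.1 - 1) * (e - 1) with hc; omega
    · simp only [lad] at h3
      set c := (p.1 - 1) * (e - 1) with hc
      have : p.1 = 1 + (p.1 - 1) := by omega
      have h4 : p.2 = u - c := by omega
      ext <;> simp <;> omega

lemma cast_lad_sub_one {e : ℕ} (he : 2 ≤ e) {p : ℕ × ℕ} (h1 : 1 ≤ p.1) (h2 : 1 ≤ p.2) :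
    ((lad e p - 1 : ℕ) : ZMod e) = res e p := by
  obtain ⟨a, ha⟩ : ∃ a, p.1 = a + 1 := ⟨p.1 - 1, by omega⟩
  obtain ⟨b, hb⟩ : ∃ b, p.2 = b + 1 := ⟨p.2 - 1, by omega⟩
  have hl : lad e p - 1 = b + a * (e - 1) := by simp [lad, ha, hb]
  have hcast : ((e - 1 : ℕ) : ZMod e) = -1 := by
    have h := ZMod.natCast_self e
    have : ((e - 1 : ℕ) : ZMod e) = (e : ZMod e) - 1 := by
      rw [Nat.cast_sub (by omega : 1 ≤ e)]; simp
    rw [this, h]; ring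
  rw [hl, res, ha, hb]
  push_cast
  rw [hcast]
  ring

lemma one_le_lad {e : ℕ} {p : ℕ × ℕ} (h2 : 1 ≤ p.2) : 1 ≤ lad e p := by
  simp only [lad]; omega

lemma le_len_iff {e : ℕ} (he : 2 ≤ e) {a u : ℕ} (ha : 1 ≤ a) :
    a ≤ len e u ↔ (a - 1) * (e - 1) ≤ u - 1 := by
  unfold len
  rw [show (a ≤ (u - 1) / (e - 1) + 1 ↔ a - 1 ≤ (u - 1) / (e - 1)) from by omega,
    Nat.le_div_iff_mul_le (by omega : 0 < e - 1)]

lemma row_le_len {e : ℕ} (he : 2 ≤ e) {p : ℕ × ℕ} (h1 : 1 ≤ p.1) (h2 : 1 ≤ p.2) :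
    p.1 ≤ len e (lad e p) := by
  rw [le_len_iff he h1]
  simp only [lad]
  set c := (p.1 - 1) * (e - 1); omega

lemma len_mono {e : ℕ} {u v : ℕ} (h : u ≤ v) : len e u ≤ len e v :=
  Nat.add_le_add_right (Nat.div_le_div_right (Nat.sub_le_sub_right h 1)) 1

lemma mul_pred {a : ℕ} (c : ℕ) (ha : 1 ≤ a) : a * c = (a - 1) * c + c := by
  obtain ⟨a0, rfl⟩ := Nat.exists_eq_add_of_le ha
  simp [Nat.add_mul, Nat.add_comm]

lemma mem_cells {l : ℕ → ℕ} {p : ℕ × ℕ} :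
    p ∈ cells l ↔ 1 ≤ p.1 ∧ 1 ≤ p.2 ∧ p.2 ≤ l p.1 := Iff.rfl

/-- ladder fill: going down a ladder inside a restricted partition. -/
lemma fill {e : ℕ} (he : 2 ≤ e) {l : ℕ → ℕ} (hrestr : IsRestricted e l)
    {u : ℕ} {p : ℕ × ℕ} (hp : p ∈ cells l) (hlad : lad e p = u) :
    ∀ a', p.1 ≤ a' → a' ≤ len e u → (a', u - (a' - 1) * (e - 1)) ∈ cells l ∧
      lad e (a', u - (a' - 1) * (e - 1)) = u := by
  intro a' ha' hlen
  induction a', ha' using Nat.le_induction with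
  | base =>
    have h1 := hp.1
    have h2 := hp.2.1
    have : p.2 = u - (p.1 - 1) * (e - 1) := by
      simp only [lad] at hlad; set c := (p.1 - 1) * (e - 1); omega
    have hpe : p = (p.1, u - (p.1 - 1) * (e - 1)) := by
      rw [← this]
    exact ⟨hpe ▸ hp, hpe ▸ hlad⟩
  | succ a ha ih =>
    have hq := ih (by omega)
    obtain ⟨hqc, hql⟩ := hq
    set b := u - (a - 1) * (e - 1) with hb
    have hb1 : 1 ≤ b := hqc.2.1
    have hble : b ≤ l a := hqc.2.2
    have ha1 : 1 ≤ a := hqc.1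
    -- b ≥ e from a + 1 ≤ len e u
    have hmul : a * (e - 1) ≤ u - 1 := by
      have := (le_len_iff he (by omega : 1 ≤ a + 1)).mp hlen
      simpa using this
    have hbu : b + (a - 1) * (e - 1) = u := by
      simpa [lad, hb] using hql
    have hbe : e ≤ b := by
      have hrel := mul_pred (e - 1) ha1
      omega
    have hnext : b - (e - 1) ≤ l (a + 1) := by
      have := hrestr a ha1
      omega
    have hval : u - a * (e - 1) = b - (e - 1) := by
      have hrel := mul_pred (e - 1) ha1
      omega
    constructor
    · rw [mem_cells]
      refine ⟨by omega, ?_, ?_⟩ <;> simp only [Nat.add_sub_cancel] <;> omega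
    · simp only [lad, Nat.add_sub_cancel]
      have hrel := mul_pred (e - 1) ha1
      omega

lemma Rlad_mono (e : ℕ) (l : ℕ → ℕ) : Monotone (Rlad e l) := fun a b h =>
  Finset.sum_le_sum_of_subset (Finset.Icc_subset_Icc_right h)

lemma Rlad_zero (e : ℕ) (l : ℕ → ℕ) : Rlad e l 0 = 0 := by simp [Rlad]

lemma Rlad_succ (e : ℕ) (l : ℕ → ℕ) (u : ℕ) :
    Rlad e l (u + 1) = Rlad e l u + (cells l ∩ ladder e (u + 1)).ncard := by
  rw [Rlad, Rlad, ← Finset.sum_Icc_succ_top (by omega : 1 ≤ u + 1)]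

section blkfacts

variable {e : ℕ} {l : ℕ → ℕ} {s M : ℕ}

lemma blk_le (h : s ≤ Rlad e l M) : blk e l s ≤ M := Nat.sInf_le h

lemma le_Rlad_blk (hM : s ≤ Rlad e l M) : s ≤ Rlad e l (blk e l s) :=
  Nat.sInf_mem (⟨M, hM⟩ : {m : ℕ | s ≤ Rlad e l m}.Nonempty)

lemma one_le_blk (hs : 1 ≤ s) (hM : s ≤ Rlad e l M) : 1 ≤ blk e l s := by
  rcases Nat.eq_zero_or_pos (blk e l s) with h0 | h
  · exfalso
    have := le_Rlad_blk hM
    rw [h0, Rlad_zero] at this; omega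
  · exact h

lemma Rlad_pred_blk_lt (hs : 1 ≤ s) (hM : s ≤ Rlad e l M) :
    Rlad e l (blk e l s - 1) < s := by
  by_contra hcon
  push_neg at hcon
  have h1 := one_le_blk hs hM
  have h2 : blk e l s ≤ blk e l s - 1 := Nat.sInf_le hcon
  omega

lemma blk_eq {u : ℕ} (hu : 1 ≤ u) (h1 : Rlad e l (u - 1) < s) (h2 : s ≤ Rlad e l u) :
    blk e l s = u := by
  have hle : blk e l s ≤ u := blk_le h2
  by_contra hne
  have hlt : blk e l s ≤ u - 1 := by omega
  have := le_Rlad_blk h2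
  have := Rlad_mono e l hlt
  omega

lemma blk_mono {s' : ℕ} (h : s ≤ s') (hM : s' ≤ Rlad e l M) : blk e l s ≤ blk e l s' :=
  Nat.sInf_le (le_trans h (le_Rlad_blk hM))

end blkfacts

lemma cong_le {e x y : ℕ} (hmod : x ≡ y [MOD e]) (h : x ≤ y + (e - 1)) (he : 1 ≤ e) :
    x ≤ y := by
  by_contra hc
  push_neg at hc
  have hd : e ∣ x - y := (Nat.modEq_iff_dvd' (by omega)).mp hmod.symm
  have := Nat.le_of_dvd (by omega) hd
  omega
/-- if some standard `μ`-tableau has residue sequence `j^λ`, then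
`λ ⊴ μ` and `λ ∼ μ`, i.e. `λ` is a move for `μ`. -/
theorem ladder_tableau_implies_move
    (e d : ℕ) (he : 2 ≤ e) (l m : ℕ → ℕ)
    (hl : IsPartitionOf l d) (hm : IsPartitionOf m d) (hrestr : IsRestricted e l)
    (T : ℕ × ℕ → ℕ) (hT : IsStandardTableau (cells m) d T)
    (hres : ∀ p ∈ cells m, res e p = ladderWeight e l (T p)) :
    DomLE (cells l) (cells m) ∧
      ∀ i : ZMod e,
        {p ∈ cells l | res e p = i}.ncard = {p ∈ cells m | res e p = i}.ncard := by
  classical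
  obtain ⟨hlpf, hlfin, hlcard⟩ := hl
  obtain ⟨hmpf, hmfin, hmcard⟩ := hm
  set Fl := hlfin.toFinset with hFldef
  set Fm := hmfin.toFinset with hFmdef
  have hFl : ∀ p, p ∈ Fl ↔ p ∈ cells l := fun p => Set.Finite.mem_toFinset _
  have hFm : ∀ p, p ∈ Fm ↔ p ∈ cells m := fun p => Set.Finite.mem_toFinset _
  have hFlcard : Fl.card = d := by
    rw [← hlcard, Set.ncard_eq_toFinset_card _ hlfin]
  have hFmcard : Fm.card = d := by
    rw [← hmcard, Set.ncard_eq_toFinset_card _ hmfin]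
  set M := Fl.sup (lad e) with hMdef
  have hMlad : ∀ p ∈ cells l, lad e p ≤ M := fun p hp =>
    Finset.le_sup ((hFl p).2 hp)
  -- fibers of lad over cells l are the ladder pieces
  have hladfiber : ∀ u : ℕ,
      ↑(Fl.filter (fun p => lad e p = u)) = cells l ∩ ladder e u := by
    intro u
    ext p
    simp only [Finset.coe_filter, Set.mem_setOf_eq, hFl, Set.mem_inter_iff,
      mem_ladder_iff he, mem_cells]
    tauto
  have hladcard : ∀ u : ℕ,
      (Fl.filter (fun p => lad e p = u)).card = (cells l ∩ ladder e u).ncard := by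
    intro u
    rw [← hladfiber u, Set.ncard_coe_finset]
  have hladfib : ∀ p ∈ Fl, lad e p ∈ Finset.Icc 1 M := by
    intro p hp
    rw [hFl] at hp
    exact Finset.mem_Icc.2 ⟨one_le_lad hp.2.1, hMlad p hp⟩
  have hRM : Rlad e l M = d := by
    rw [Rlad]
    have := Finset.card_eq_sum_card_fiberwise hladfib
    rw [hFlcard] at this
    rw [this]
    exact Finset.sum_congr rfl fun u _ => (hladcard u).symm
  have hrzero : ∀ u, M < u → (cells l ∩ ladder e u).ncard = 0 := by
    intro u hu
    have : cells l ∩ ladder e u = ∅ := by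
      ext p
      simp only [Set.mem_inter_iff, Set.mem_empty_iff_false, iff_false]
      rintro ⟨hp1, hp2⟩
      have := (mem_ladder_iff he).1 hp2
      have := hMlad p hp1
      omega
    rw [this, Set.ncard_empty]
  have hRN : ∀ N, M ≤ N → Rlad e l N = d := by
    intro N hN
    rw [← hRM, Rlad, Rlad]
    refine (Finset.sum_subset (Finset.Icc_subset_Icc_right hN) ?_).symm
    intro u hu hnu
    simp only [Finset.mem_Icc] at hu hnu
    exact hrzero u (by omega)
  have hRled : ∀ N, Rlad e l N ≤ d := by
    intro N
    rcases le_or_gt N M with h | h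
    · rw [← hRM]; exact Rlad_mono e l h
    · rw [hRN N (le_of_lt h)]
  -- tableau components
  obtain ⟨hTmem, hTinj, hTsurj, hTrow, hTcol⟩ := hT
  set B : ℕ × ℕ → ℕ := fun p => blk e l (T p) with hBdef
  have hresB : ∀ p ∈ cells m, res e p = ((B p - 1 : ℕ) : ZMod e) := by
    intro p hp
    exact hres p hp
  have hTd : ∀ p ∈ cells m, T p ≤ Rlad e l M := by
    intro p hp; rw [hRM]; exact (hTmem p hp).2
  have hBub : ∀ p ∈ cells m, 1 ≤ B p ∧ B p ≤ M := by
    intro p hp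
    exact ⟨one_le_blk (hTmem p hp).1 (hTd p hp), blk_le (hTd p hp)⟩
  have hBmod : ∀ p ∈ cells m, lad e p ≡ B p [MOD e] := by
    intro p hp
    have h1 : ((lad e p - 1 : ℕ) : ZMod e) = ((B p - 1 : ℕ) : ZMod e) := by
      rw [cast_lad_sub_one he hp.1 hp.2.1, hresB p hp]
    have h2 : lad e p - 1 ≡ B p - 1 [MOD e] := (ZMod.natCast_eq_natCast_iff _ _ _).1 h1
    have h3 := h2.add_right 1
    rwa [Nat.sub_add_cancel (one_le_lad hp.2.1),
      Nat.sub_add_cancel (hBub p hp).1] at h3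
  have hcong : ∀ p ∈ cells m, lad e p ≤ B p + (e - 1) → lad e p ≤ B p := by
    intro p hp hle
    exact cong_le (hBmod p hp) hle (by omega)
  -- Key: each node lies in a ladder at most its block
  have key : ∀ s : ℕ, ∀ p ∈ cells m, T p = s → lad e p ≤ B p := by
    intro s
    induction s using Nat.strong_induction_on with
    | _ s ih =>
      rintro ⟨a, b⟩ hp rfl
      have ha1 : 1 ≤ a := hp.1
      have hb1 : 1 ≤ b := hp.2.1
      by_cases hb2 : 2 ≤ b
      · have hq : (a, b - 1) ∈ cells m := ⟨ha1, by omega, by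
          have := hp.2.2; simp only at this ⊢; omega⟩
        have hlt : T (a, b - 1) < T (a, b) := by
          have := hTrow a (b - 1) hq (by rw [Nat.sub_add_cancel (by omega : 1 ≤ b)]; exact hp)
          rwa [Nat.sub_add_cancel (by omega : 1 ≤ b)] at this
        have hih : lad e (a, b - 1) ≤ B (a, b - 1) := ih _ hlt _ hq rfl
        have hmono : B (a, b - 1) ≤ B (a, b) := blk_mono (le_of_lt hlt) (hTd _ hp)
        have hladd : lad e (a, b) = lad e (a, b - 1) + 1 := by
          simp only [lad]; omega
        exact hcong _ hp (by omega)
      · by_cases ha2 : 2 ≤ a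
        · have hb : b = 1 := by omega
          subst hb
          have hq : (a - 1, 1) ∈ cells m := by
            refine ⟨by omega, le_refl 1, ?_⟩
            have h1 : m a ≤ m (a - 1) := by
              have := hmpf.1 (a - 1) (by omega)
              rwa [Nat.sub_add_cancel (by omega : 1 ≤ a)] at this
            have h2 : 1 ≤ m a := le_trans hp.2.1 hp.2.2
            simp only; omega
          have hlt : T (a - 1, 1) < T (a, 1) := by
            have h := hTcol (a - 1) 1 hq (by
              rw [Nat.sub_add_cancel (by omega : 1 ≤ a)]; exact hp)
            rwa [Nat.sub_add_cancel (by omega : 1 ≤ a)] at h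
          have hih : lad e (a - 1, 1) ≤ B (a - 1, 1) := ih _ hlt _ hq rfl
          have hmono : B (a - 1, 1) ≤ B (a, 1) := blk_mono (le_of_lt hlt) (hTd _ hp)
          have hladd : lad e (a, 1) = lad e (a - 1, 1) + (e - 1) := by
            simp only [lad]
            have := mul_pred (e - 1) (by omega : 1 ≤ a - 1)
            omega
          exact hcong _ hp (by omega)
        · have hab : a = 1 ∧ b = 1 := by omega
          have : lad e (a, b) = 1 := by simp [lad, hab.1, hab.2]
          rw [this]
          exact (hBub _ hp).1
  have keyp : ∀ p ∈ cells m, lad e p ≤ B p := fun p hp => key (T p) p hp rfl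
  -- row monotonicity of T
  have hrowmono : ∀ a b c : ℕ, 1 ≤ b → b ≤ c → (a, c) ∈ cells m → T (a, b) ≤ T (a, c) := by
    intro a b c hb hbc
    induction c, hbc using Nat.le_induction with
    | base => intro _; exact le_refl _
    | succ c hc ih =>
      intro hmem
      have hcm : (a, c) ∈ cells m := ⟨hmem.1, by omega, by
        have := hmem.2.2; simp only at this ⊢; omega⟩
      exact le_trans (ih hcm) (le_of_lt (hTrow a c hcm hmem))
  -- nodes in the same block have distinct rows
  have hdistinct : ∀ p ∈ cells m, ∀ q ∈ cells m, p.1 = q.1 → B p = B q → p = q := by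
    have main : ∀ p ∈ cells m, ∀ q ∈ cells m, p.1 = q.1 → B p = B q → p.2 < q.2 → False := by
      rintro ⟨a, b⟩ hp ⟨a', b'⟩ hq hrow hB hlt
      simp only at hrow hlt
      subst hrow
      have hb1 : 1 ≤ b := hp.2.1
      have hq' : (a, b' - 1) ∈ cells m := ⟨hq.1, by omega, by
        have := hq.2.2; simp only at this ⊢; omega⟩
      have h1 : T (a, b) ≤ T (a, b' - 1) := hrowmono a b (b' - 1) hb1 (by omega) hq'
      have h2 : T (a, b' - 1) < T (a, b') := by
        have h := hTrow a (b' - 1) hq' (by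
          rw [Nat.sub_add_cancel (by omega : 1 ≤ b')]; exact hq)
        rwa [Nat.sub_add_cancel (by omega : 1 ≤ b')] at h
      have hB1 : B (a, b) ≤ B (a, b' - 1) := blk_mono h1 (hTd _ hq')
      have hB2 : B (a, b' - 1) ≤ B (a, b') := blk_mono (le_of_lt h2) (hTd _ hq)
      have hBq' : B (a, b' - 1) = B (a, b') := by omega
      have hres1 : res e (a, b' - 1) = res e (a, b') := by
        rw [hresB _ hq', hresB _ hq, hBq']
      have hone : ((1 : ℕ) : ZMod e) = 0 := by
        have hcast : ((b' - 1 : ℕ) : ZMod e) = (b' : ZMod e) - 1 := by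
          rw [Nat.cast_sub (by omega : 1 ≤ b')]; simp
        simp only [res, hcast] at hres1
        push_cast
        linear_combination -hres1
      haveI : NeZero e := ⟨by omega⟩
      have hdvd := (ZMod.natCast_eq_zero_iff 1 e).mp hone
      have := Nat.le_of_dvd (by omega) hdvd
      omega
    intro p hp q hq hrow hB
    rcases lt_trichotomy p.2 q.2 with h | h | h
    · exact absurd (main p hp q hq hrow hB h) (fun f => f)
    · exact Prod.ext hrow h
    · exact absurd (main q hq p hp hrow.symm hB.symm h) (fun f => f)
  -- block fibers of μ have cardinality r_u
  have hBfib : ∀ p ∈ Fm, B p ∈ Finset.Icc 1 M := by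
    intro p hp
    rw [hFm] at hp
    exact Finset.mem_Icc.2 (hBub p hp)
  have hblkcard : ∀ u ∈ Finset.Icc 1 M,
      (Fm.filter (fun p => B p = u)).card = (cells l ∩ ladder e u).ncard := by
    intro u hu
    rw [Finset.mem_Icc] at hu
    have himg : (Fm.filter (fun p => B p = u)).image T
        = Finset.Ioc (Rlad e l (u - 1)) (Rlad e l u) := by
      ext s
      simp only [Finset.mem_image, Finset.mem_filter, Finset.mem_Ioc, hFm]
      constructor
      · rintro ⟨p, ⟨hpm, hpB⟩, rfl⟩
        constructor
        · have := Rlad_pred_blk_lt (hTmem p hpm).1 (hTd p hpm)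
          rwa [show blk e l (T p) = B p from rfl, hpB] at this
        · have := le_Rlad_blk (hTd p hpm)
          rwa [show blk e l (T p) = B p from rfl, hpB] at this
      · rintro ⟨hs1, hs2⟩
        have hs0 : 1 ≤ s := by omega
        have hsd : s ≤ d := le_trans hs2 (hRled u)
        obtain ⟨p, hpm, hps⟩ := hTsurj s hs0 hsd
        refine ⟨p, ⟨hpm, ?_⟩, hps⟩
        show blk e l (T p) = u
        rw [hps]
        exact blk_eq hu.1 hs1 hs2
    have hinj : Set.InjOn T ↑(Fm.filter (fun p => B p = u)) := by
      intro p hp q hq hpq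
      simp only [Finset.coe_filter, Set.mem_setOf_eq, hFm] at hp hq
      exact hTinj p hp.1 q hq.1 hpq
    have hcard := Finset.card_image_of_injOn hinj
    rw [himg, Nat.card_Ioc] at hcard
    have hsucc : Rlad e l u = Rlad e l (u - 1) + (cells l ∩ ladder e u).ncard := by
      have := Rlad_succ e l (u - 1)
      rwa [Nat.sub_add_cancel hu.1] at this
    omega
  constructor
  · -- dominance
    intro k
    have hsigl : sigmaSet (cells l) k = (Fl.filter (fun p => p.1 ≤ k)).card := by
      rw [sigmaSet, ← Set.ncard_coe_finset]
      congr 1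
      ext p
      simp only [Finset.coe_filter, Set.mem_setOf_eq, hFl, Set.mem_inter_iff]
    have hsigm : sigmaSet (cells m) k = (Fm.filter (fun p => p.1 ≤ k)).card := by
      rw [sigmaSet, ← Set.ncard_coe_finset]
      congr 1
      ext p
      simp only [Finset.coe_filter, Set.mem_setOf_eq, hFm, Set.mem_inter_iff]
    have hsplitl := Finset.card_filter_add_card_filter_not
      (s := Fl) (p := fun p => p.1 ≤ k)
    have hsplitm := Finset.card_filter_add_card_filter_not
      (s := Fm) (p := fun p => p.1 ≤ k)
    suffices hcomp : (Fm.filter (fun p => ¬ p.1 ≤ k)).card ≤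
        (Fl.filter (fun p => ¬ p.1 ≤ k)).card by
      rw [hsigl, hsigm]
      omega
    have hmfib : (Fm.filter (fun p => ¬ p.1 ≤ k)).card =
        ∑ u ∈ Finset.Icc 1 M,
          ((Fm.filter (fun p => ¬ p.1 ≤ k)).filter (fun p => B p = u)).card :=
      Finset.card_eq_sum_card_fiberwise
        (fun p hp => hBfib p (Finset.mem_filter.1 hp).1)
    have hlfib : (Fl.filter (fun p => ¬ p.1 ≤ k)).card =
        ∑ u ∈ Finset.Icc 1 M,
          ((Fl.filter (fun p => ¬ p.1 ≤ k)).filter (fun p => lad e p = u)).card :=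
      Finset.card_eq_sum_card_fiberwise
        (fun p hp => hladfib p (Finset.mem_filter.1 hp).1)
    rw [hmfib, hlfib]
    refine Finset.sum_le_sum ?_
    intro u hu
    set Sm := (Fm.filter (fun p => ¬ p.1 ≤ k)).filter (fun p => B p = u) with hSm
    set Sl := (Fl.filter (fun p => ¬ p.1 ≤ k)).filter (fun p => lad e p = u) with hSl
    have hSmmem : ∀ p, p ∈ Sm ↔ p ∈ cells m ∧ k < p.1 ∧ B p = u := by
      intro p
      simp only [hSm, Finset.mem_filter, hFm, not_le]
      tauto
    have hSlmem : ∀ p, p ∈ Sl ↔ p ∈ cells l ∧ k < p.1 ∧ lad e p = u := by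
      intro p
      simp only [hSl, Finset.mem_filter, hFl, not_le]
      tauto
    -- bound (ii): Sm.card ≤ (Ioc k (len e u)).card via distinct rows
    have hmap : ∀ p ∈ Sm, p.1 ∈ Finset.Ioc k (len e u) := by
      intro p hp
      rw [hSmmem] at hp
      obtain ⟨hpm, hpk, hpB⟩ := hp
      refine Finset.mem_Ioc.2 ⟨hpk, ?_⟩
      have h1 : lad e p ≤ u := hpB ▸ keyp p hpm
      exact le_trans (row_le_len he hpm.1 hpm.2.1) (len_mono h1)
    have hinj2 : Set.InjOn Prod.fst (↑Sm : Set (ℕ × ℕ)) := by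
      intro p hp q hq h
      rw [Finset.mem_coe, hSmmem] at hp hq
      exact hdistinct p hp.1 q hq.1 h (by rw [hp.2.2, hq.2.2])
    have hbound2 : Sm.card ≤ (Finset.Ioc k (len e u)).card :=
      Finset.card_le_card_of_injOn Prod.fst hmap hinj2
    -- bound (i): Sm.card ≤ r_u
    have hbound1 : Sm.card ≤ (cells l ∩ ladder e u).ncard := by
      rw [← hblkcard u hu]
      apply Finset.card_le_card
      intro p hp
      rw [hSmmem] at hp
      rw [Finset.mem_filter, hFm]
      exact ⟨hp.1, hp.2.2⟩
    by_cases hex : ∃ p ∈ cells l, lad e p = u ∧ p.1 ≤ k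
    · obtain ⟨p, hpF, hpu, hpk⟩ := hex
      have hsub : ∀ a' ∈ Finset.Ioc k (len e u),
          (a', u - (a' - 1) * (e - 1)) ∈ Sl := by
        intro a' ha'
        rw [Finset.mem_Ioc] at ha'
        obtain ⟨hmem, hlad⟩ := fill he hrestr hpF hpu a' (by omega) ha'.2
        rw [hSlmem]
        exact ⟨hmem, ha'.1, hlad⟩
      have hIoc : (Finset.Ioc k (len e u)).card ≤ Sl.card :=
        Finset.card_le_card_of_injOn _ hsub
          (fun x _ y _ h => congrArg Prod.fst h)
      exact le_trans hbound2 hIoc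
    · push_neg at hex
      have hSleq : Sl = Fl.filter (fun p => lad e p = u) := by
        ext p
        rw [hSlmem, Finset.mem_filter, hFl]
        constructor
        · rintro ⟨h1, _, h3⟩; exact ⟨h1, h3⟩
        · rintro ⟨h1, h3⟩; exact ⟨h1, hex p h1 h3, h3⟩
      rw [hSleq, hladcard u]
      exact hbound1
  · -- residue contents coincide
    intro i
    have hli : {p ∈ cells l | res e p = i} =
        ↑(Fl.filter (fun p => res e p = i)) := by
      ext p
      simp only [Finset.coe_filter, Set.mem_setOf_eq, hFl]
    have hmi : {p ∈ cells m | res e p = i} =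
        ↑(Fm.filter (fun p => res e p = i)) := by
      ext p
      simp only [Finset.coe_filter, Set.mem_setOf_eq, hFm]
    rw [hli, hmi, Set.ncard_coe_finset, Set.ncard_coe_finset]
    rw [Finset.card_eq_sum_card_fiberwise (f := lad e) (t := Finset.Icc 1 M)
      (fun p hp => hladfib p (Finset.mem_filter.1 hp).1)]
    rw [Finset.card_eq_sum_card_fiberwise (f := B) (t := Finset.Icc 1 M)
      (fun p hp => hBfib p (Finset.mem_filter.1 hp).1)]
    refine Finset.sum_congr rfl ?_
    intro u hu
    by_cases hi : ((u - 1 : ℕ) : ZMod e) = i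
    · have h1 : (Fl.filter (fun p => res e p = i)).filter (fun p => lad e p = u)
          = Fl.filter (fun p => lad e p = u) := by
        ext p
        simp only [Finset.mem_filter, hFl]
        constructor
        · tauto
        · rintro ⟨h1, h2⟩
          refine ⟨⟨h1, ?_⟩, h2⟩
          have hc := cast_lad_sub_one he h1.1 h1.2.1
          rw [h2] at hc
          rw [hc] at hi
          exact hi
      have h2 : (Fm.filter (fun p => res e p = i)).filter (fun p => B p = u)
          = Fm.filter (fun p => B p = u) := by
        ext p
        simp only [Finset.mem_filter, hFm]
        constructor
        · tauto
        · rintro ⟨h1, h2⟩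
          refine ⟨⟨h1, ?_⟩, h2⟩
          rw [hresB p h1, h2]
          exact hi
      rw [h1, h2, hladcard u, hblkcard u hu]
    · have h1 : (Fl.filter (fun p => res e p = i)).filter (fun p => lad e p = u)
          = ∅ := by
        rw [Finset.eq_empty_iff_forall_notMem]
        intro p hp
        simp only [Finset.mem_filter, hFl] at hp
        obtain ⟨⟨hpm, hpi⟩, hpu⟩ := hp
        apply hi
        have hc := cast_lad_sub_one he hpm.1 hpm.2.1
        rw [hpu] at hc
        rw [hc, hpi]
      have h2 : (Fm.filter (fun p => res e p = i)).filter (fun p => B p = u)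
          = ∅ := by
        rw [Finset.eq_empty_iff_forall_notMem]
        intro p hp
        simp only [Finset.mem_filter, hFm] at hp
        obtain ⟨⟨hpm, hpi⟩, hpu⟩ := hp
        apply hi
        rw [← hpu, ← hresB p hpm, hpi]
      rw [h1, h2]

end KN
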